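/- arXiv:2603.00567 — 2 statements merged into one kernel-verified Lean document; each statement's English description precedes it below -/
import Mathlib

section
/- Let K ≥ 2 be an integer and τ > 0 a temperature. For score vectors S, S' : Fin K → ℝ, let π_S and π_{S'} be the associated softmax policies. Then the total variation distance satisfies TV(π_S, π_{S'}) ≤ ((K − 1)/(2τ)) · max_{a ∈ Fin K} |S(a) − S'(a)|. -/
/-!
Move from `S` to `S'` along the segment `S + t • (S' - S)`. With `Δ = S' - S` and `π` the softmax
policy at time `t`, the derivative of `π a` is `π a * (Δ a - ∑ b, π b * Δ b) / τ`. Since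
`Δ a - ∑ b, π b * Δ b = ∑ b ≠ a, π b * (Δ a - Δ b)` has absolute value at most `2M (1 - π a)`, and
`π a (1 - π a) ≤ 1/4`, each coordinate of the policy is `M / (2τ)`-Lipschitz along the segment.
Summing over the `K` coordinates gives `TV ≤ K M / (4τ) ≤ (K - 1) M / (2τ)`, as `K ≥ 2`.
-/

/-- The softmax policy with temperature `τ` associated with a score vector
`S : Fin K → ℝ`. -/
noncomputable def softmaxPolicy {K : ℕ} (τ : ℝ) (S : Fin K → ℝ) (a : Fin K) : ℝ :=
  Real.exp (S a / τ) / ∑ b : Fin K, Real.exp (S b / τ)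

open Finset

theorem abs_sub_sum_mul_le {ι : Type*} [Fintype ι] {p x : ι → ℝ} {C : ℝ}
    (hp : ∀ b, 0 ≤ p b) (hp_sum : ∑ b, p b = 1) (a : ι) (hx : ∀ b, |x a - x b| ≤ C) :
    |x a - ∑ b, p b * x b| ≤ C * (1 - p a) := by
  classical
  have hmean : x a - ∑ b, p b * x b = ∑ b ∈ univ.erase a, p b * (x a - x b) := by
    rw [sum_erase _ (by simp)]
    simp only [mul_sub, sum_sub_distrib, ← sum_mul, hp_sum, one_mul]
  calc |x a - ∑ b, p b * x b| ≤ ∑ b ∈ univ.erase a, p b * |x a - x b| := by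
        rw [hmean]
        refine (abs_sum_le_sum_abs _ _).trans_eq (sum_congr rfl fun b _ => ?_)
        rw [abs_mul, abs_of_nonneg (hp b)]
    _ ≤ ∑ b ∈ univ.erase a, p b * C :=
        sum_le_sum fun b _ => mul_le_mul_of_nonneg_left (hx b) (hp b)
    _ = C * (1 - p a) := by
        rw [← sum_mul, sum_erase_eq_sub (mem_univ a), hp_sum, mul_comm]

theorem abs_mul_sub_sum_mul_le {ι : Type*} [Fintype ι] {p x : ι → ℝ} {C : ℝ}
    (hp : ∀ b, 0 ≤ p b) (hp_sum : ∑ b, p b = 1) (a : ι) (hx : ∀ b, |x a - x b| ≤ C) :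
    |p a * (x a - ∑ b, p b * x b)| ≤ C / 4 := by
  have hdev := abs_sub_sum_mul_le hp hp_sum a hx
  have hC : 0 ≤ C := (abs_nonneg _).trans (hx a)
  rw [abs_mul, abs_of_nonneg (hp a)]
  nlinarith [mul_le_mul_of_nonneg_left hdev (hp a), sq_nonneg (2 * p a - 1)]

section Softmax

variable {K : ℕ}

theorem softmaxPolicy_pos (τ : ℝ) (S : Fin K → ℝ) (a : Fin K) : 0 < softmaxPolicy τ S a :=
  div_pos (Real.exp_pos _) (sum_pos (fun _ _ => Real.exp_pos _) ⟨a, mem_univ a⟩)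

theorem sum_softmaxPolicy [NeZero K] (τ : ℝ) (S : Fin K → ℝ) : ∑ a, softmaxPolicy τ S a = 1 := by
  simp only [softmaxPolicy, ← sum_div]
  exact div_self (sum_pos (fun _ _ => Real.exp_pos _) univ_nonempty).ne'

theorem hasDerivAt_softmaxPolicy_add_smul (τ : ℝ) (S Δ : Fin K → ℝ) (a : Fin K) (t : ℝ) :
    HasDerivAt (fun t => softmaxPolicy τ (S + t • Δ) a)
      (softmaxPolicy τ (S + t • Δ) a *
        (Δ a - ∑ b, softmaxPolicy τ (S + t • Δ) b * Δ b) / τ) t := by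
  have hexp : ∀ b, HasDerivAt (fun t => Real.exp ((S + t • Δ) b / τ))
      (Real.exp ((S + t • Δ) b / τ) * (Δ b / τ)) t := fun b => by
    simpa using ((((hasDerivAt_id t).mul_const (Δ b)).const_add (S b)).div_const τ).exp
  have hZ : (∑ b, Real.exp ((S + t • Δ) b / τ)) ≠ 0 :=
    (sum_pos (fun _ _ => Real.exp_pos _) ⟨a, mem_univ a⟩).ne'
  refine ((hexp a).fun_div (HasDerivAt.fun_sum fun b _ => hexp b) hZ).congr_deriv ?_
  simp only [softmaxPolicy, div_mul_eq_mul_div, ← sum_div, mul_div_assoc']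
  field_simp

theorem abs_softmaxPolicy_sub_le {τ M : ℝ} (hτ : 0 < τ) {S S' : Fin K → ℝ}
    (hM : ∀ b, |S b - S' b| ≤ M) (a : Fin K) :
    |softmaxPolicy τ S a - softmaxPolicy τ S' a| ≤ M / (2 * τ) := by
  have : NeZero K := ⟨a.pos.ne'⟩
  set Δ := S' - S
  have hΔ : ∀ b, |Δ a - Δ b| ≤ 2 * M := fun b => by
    have := abs_sub (Δ a) (Δ b)
    simp only [Δ, Pi.sub_apply, abs_sub_comm (S' _)] at this ⊢
    linarith [hM a, hM b]
  have hderiv : ∀ t : ℝ, ‖softmaxPolicy τ (S + t • Δ) a *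
      (Δ a - ∑ b, softmaxPolicy τ (S + t • Δ) b * Δ b) / τ‖ ≤ M / (2 * τ) := fun (t : ℝ) => by
    have := abs_mul_sub_sum_mul_le (fun b => (softmaxPolicy_pos τ (S + t • Δ) b).le)
      (sum_softmaxPolicy τ _) a hΔ
    rw [Real.norm_eq_abs, abs_div, abs_of_pos hτ, div_le_div_iff₀ hτ (by positivity)]
    nlinarith
  have hmvt := norm_image_sub_le_of_norm_deriv_le_segment_01'
    (f := fun t => softmaxPolicy τ (S + t • Δ) a)
    (fun t _ => (hasDerivAt_softmaxPolicy_add_smul τ S Δ a t).hasDerivWithinAt)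
    (fun t _ => hderiv t)
  simpa [Δ, Real.norm_eq_abs, abs_sub_comm] using hmvt

end Softmax

/-- Softmax total variation sensitivity: for score vectors `S, S'` and
temperature `τ > 0`, the total variation distance between the two softmax
policies is at most `((K − 1)/(2τ)) · max_a |S(a) − S'(a)|`. -/
theorem softmax_tv_le (K : ℕ) (hK : 2 ≤ K) (τ : ℝ) (hτ : 0 < τ)
    (S S' : Fin K → ℝ) :
    (1 / 2) * ∑ a : Fin K, |softmaxPolicy τ S a - softmaxPolicy τ S' a| ≤
      ((K : ℝ) - 1) / (2 * τ) *
        Finset.univ.sup' (Finset.univ_nonempty_iff.mpr ⟨⟨0, by omega⟩⟩)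
          (fun a : Fin K => |S a - S' a|) := by
  set M := Finset.univ.sup' (Finset.univ_nonempty_iff.mpr ⟨⟨0, by omega⟩⟩)
    (fun a : Fin K => |S a - S' a|)
  have hM : ∀ b, |S b - S' b| ≤ M := fun b => le_sup' (fun a => |S a - S' a|) (mem_univ b)
  have hM_nonneg : 0 ≤ M := (abs_nonneg _).trans (hM ⟨0, by omega⟩)
  have hsum : ∑ a, |softmaxPolicy τ S a - softmaxPolicy τ S' a| ≤ K * (M / (2 * τ)) := by
    simpa using sum_le_sum fun a (_ : a ∈ univ) => abs_softmaxPolicy_sub_le hτ hM a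
  have hK' : (2 : ℝ) ≤ K := by exact_mod_cast hK
  calc (1 / 2) * ∑ a, |softmaxPolicy τ S a - softmaxPolicy τ S' a|
      ≤ K / 2 * (M / (2 * τ)) := by linarith
    _ ≤ (K - 1) * (M / (2 * τ)) := by gcongr; linarith
    _ = (K - 1) / (2 * τ) * M := by ring
end

section
/- Let K ≥ 2 be an integer, η > 0 a learning rate, and for each round s ≥ 1 let r̂_s : Fin K → ℝ be reward estimates with |r̂_s(a)| ≤ 1 for all a. Define the cumulative score S_t(a) = η · Σ_{s=1}^{t} r̂_s(a) and the exponential-weights policy π_t(a) = exp(S_t(a)) / Σ_{a'} exp(S_t(a')). Then for all t ≥ 1 and τ ≥ 0, the policy drift satisfies TV(π_t, π_{t+τ}) ≤ (K − 1)·η·τ. -/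
/-!
Both policies are softmaxes of score vectors that differ by at most `ητ` in every coordinate.
Writing `π_t(a) - π_{t+τ}(a)` over the common denominator `Z_t Z_{t+τ}` pairs the terms
`e^{S_t(a) + S_{t+τ}(b)}` and `e^{S_{t+τ}(a) + S_t(b)}`, whose exponents differ by at most `2ητ`;
the trapezoid bound `|e^u - e^v| ≤ |u - v| (e^u + e^v) / 2` for the convex function `exp`
then gives a total variation of at most `ητ ≤ (K - 1) ητ`.
-/

section

open Real Finset

lemma exp_sub_one_le_mul_exp_add_one_div_two {d : ℝ} (hd : 0 ≤ d) :
    exp d - 1 ≤ d * (exp d + 1) / 2 := by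
  let g : ℝ → ℝ := fun x => x * (exp x + 1) / 2 - (exp x - 1)
  have hg : ∀ x, HasDerivAt g ((1 + (x - 1) * exp x) / 2) x := fun x => by
    exact ((((hasDerivAt_id' x).mul ((hasDerivAt_exp x).add_const 1)).div_const 2).sub
      ((hasDerivAt_exp x).sub_const 1)).congr_deriv (by ring)
  -- `(1 - x) e^x ≤ e^{-x} e^x = 1`
  have hg' : ∀ x, 0 ≤ (1 + (x - 1) * exp x) / 2 := fun x => by
    have := mul_le_mul_of_nonneg_right (add_one_le_exp (-x)) (exp_pos x).le
    rw [← exp_add, neg_add_cancel, exp_zero] at this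
    linarith
  have := monotone_of_hasDerivAt_nonneg hg hg' hd
  simp only [g, exp_zero] at this
  linarith

lemma abs_exp_sub_exp_le (u v : ℝ) :
    |exp u - exp v| ≤ |u - v| / 2 * (exp u + exp v) := by
  wlog h : v ≤ u generalizing u v
  · rw [abs_sub_comm, abs_sub_comm u, add_comm]
    exact this v u (le_of_not_ge h)
  have hd : 0 ≤ u - v := sub_nonneg.2 h
  have key := mul_le_mul_of_nonneg_left (exp_sub_one_le_mul_exp_add_one_div_two hd)
    (exp_pos v).le
  have hu : exp v * exp (u - v) = exp u := by rw [← exp_add, add_sub_cancel]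
  rw [abs_of_nonneg (sub_nonneg.2 (exp_le_exp.2 h)), abs_of_nonneg hd]
  nlinarith

section Softmax

variable {ι : Type*} [Fintype ι]

noncomputable def softmax (x : ι → ℝ) (a : ι) : ℝ :=
  exp (x a) / ∑ b, exp (x b)

lemma sum_exp_pos [Nonempty ι] (x : ι → ℝ) : 0 < ∑ b, exp (x b) :=
  sum_pos (fun b _ => exp_pos (x b)) univ_nonempty

lemma softmax_sub_softmax [Nonempty ι] (x y : ι → ℝ) (a : ι) :
    softmax x a - softmax y a =
      (∑ b, (exp (x a + y b) - exp (y a + x b))) /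
        ((∑ b, exp (x b)) * ∑ b, exp (y b)) := by
  rw [softmax, softmax, div_sub_div _ _ (sum_exp_pos x).ne' (sum_exp_pos y).ne',
    sum_sub_distrib]
  simp only [exp_add, ← mul_sum]
  ring

-- The pairing in `softmax_sub_softmax` turns the coordinatewise bound `δ` into the bound `2δ`
-- on exponents, which `abs_exp_sub_exp_le` halves back.
lemma sum_abs_softmax_sub_softmax_le [Nonempty ι] {x y : ι → ℝ} {δ : ℝ}
    (h : ∀ a, |x a - y a| ≤ δ) :
    ∑ a, |softmax x a - softmax y a| ≤ 2 * δ := by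
  set Z := (∑ b, exp (x b)) * ∑ b, exp (y b)
  have hZ : 0 < Z := mul_pos (sum_exp_pos x) (sum_exp_pos y)
  have hpair : ∀ a b, |exp (x a + y b) - exp (y a + x b)| ≤
      δ * (exp (x a + y b) + exp (y a + x b)) := fun a b => by
    refine (abs_exp_sub_exp_le _ _).trans (mul_le_mul_of_nonneg_right ?_ (by positivity))
    have : x a + y b - (y a + x b) = (x a - y a) - (x b - y b) := by ring
    rw [this]
    linarith [abs_sub (x a - y a) (x b - y b), h a, h b]
  have htotal : ∑ a, ∑ b, (exp (x a + y b) + exp (y a + x b)) = 2 * Z := by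
    simp only [exp_add, sum_add_distrib, ← mul_sum, ← sum_mul, Z]
    ring
  calc ∑ a, |softmax x a - softmax y a|
      ≤ ∑ a, ∑ b, δ * (exp (x a + y b) + exp (y a + x b)) / Z := by
        gcongr with a
        rw [softmax_sub_softmax, abs_div, abs_of_pos hZ, ← sum_div]
        gcongr
        exact (abs_sum_le_sum_abs _ _).trans (sum_le_sum fun b _ => hpair a b)
    _ = 2 * δ := by
        simp only [← sum_div, ← mul_sum, htotal]
        field_simp

end Softmax

lemma abs_sum_Icc_add_sub_sum_Icc_le {f : ℕ → ℝ} (hf : ∀ s, |f s| ≤ 1) (t τ : ℕ) :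
    |∑ s ∈ Icc 1 (t + τ), f s - ∑ s ∈ Icc 1 t, f s| ≤ τ := by
  induction τ with
  | zero => simp
  | succ τ ih =>
    rw [← add_assoc, sum_Icc_succ_top (by omega), add_sub_right_comm, Nat.cast_succ]
    exact (abs_add_le _ _).trans (add_le_add ih (hf _))

end

theorem ftrl_policy_drift_general (K : ℕ) (hK : 2 ≤ K) (η : ℝ) (hη : 0 < η)
    (r : ℕ → Fin K → ℝ) (hr : ∀ s a, |r s a| ≤ 1)
    (S : ℕ → Fin K → ℝ)
    (hS : ∀ u a, S u a = η * ∑ s ∈ Finset.Icc 1 u, r s a)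
    (π : ℕ → Fin K → ℝ)
    (hπ : ∀ u a, π u a = Real.exp (S u a) / ∑ a' : Fin K, Real.exp (S u a'))
    (t τ : ℕ) :
    (1 / 2) * ∑ a : Fin K, |π t a - π (t + τ) a| ≤ ((K : ℝ) - 1) * η * τ := by
  have : Nonempty (Fin K) := ⟨⟨0, by omega⟩⟩
  have hπ_eq : ∀ u, π u = softmax (S u) := fun u => funext (hπ u)
  have hdrift : ∀ a, |S t a - S (t + τ) a| ≤ η * τ := fun a => by
    rw [abs_sub_comm, hS, hS, ← mul_sub, abs_mul, abs_of_pos hη]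
    exact mul_le_mul_of_nonneg_left (abs_sum_Icc_add_sub_sum_Icc_le (hr · a) t τ) hη.le
  have hK' : (1 : ℝ) ≤ K - 1 := by
    have : (2 : ℝ) ≤ K := by exact_mod_cast hK
    linarith
  calc (1 / 2) * ∑ a, |π t a - π (t + τ) a| ≤ η * τ := by
        rw [hπ_eq, hπ_eq]
        linarith [sum_abs_softmax_sub_softmax_le hdrift]
    _ ≤ ((K : ℝ) - 1) * η * τ := by
        rw [mul_assoc]
        exact le_mul_of_one_le_left (by positivity) hK'

/-- FTRL / exponential-weights policy drift: with learning rate `η > 0`,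
bounded reward estimates `|r̂_s(a)| ≤ 1`, cumulative scores
`S_t(a) = η·Σ_{s=1}^t r̂_s(a)` and policies
`π_t(a) = exp(S_t(a)) / Σ_{a'} exp(S_t(a'))`, the total variation distance
between `π_t` and `π_{t+τ}` is at most `(K − 1)·η·τ`. -/
theorem ftrl_policy_drift (K : ℕ) (hK : 2 ≤ K) (η : ℝ) (hη : 0 < η)
    (r : ℕ → Fin K → ℝ) (hr : ∀ s a, |r s a| ≤ 1)
    (S : ℕ → Fin K → ℝ)
    (hS : ∀ u a, S u a = η * ∑ s ∈ Finset.Icc 1 u, r s a)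
    (π : ℕ → Fin K → ℝ)
    (hπ : ∀ u a, π u a = Real.exp (S u a) / ∑ a' : Fin K, Real.exp (S u a'))
    (t τ : ℕ) (ht : 1 ≤ t) :
    (1 / 2) * ∑ a : Fin K, |π t a - π (t + τ) a| ≤ ((K : ℝ) - 1) * η * τ :=
  ftrl_policy_drift_general K hK η hη r hr S hS π hπ t τ
end
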